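/- arXiv:1502.04282 — 3 statements merged into one kernel-verified Lean document; each statement's English description precedes it below -/
import Mathlib

section
/- For every b ∈ ℕ there exist complex constants c₀, …, c_b with c_b ≠ 0, and polynomials q_{r,s} ∈ ℂ[X,Y] for 0 ≤ r, s ≤ b, such that for every open set U ⊆ ℂ, every C^∞-smooth function f : U → ℂ, and every w ∈ U: (T_w^b f)(w) = Σ_{j=0}^b c_j · w̄^j · (∂^j f/∂w̄^j)(w) + Σ_{0≤r,s≤b} q_{r,s}(w, w̄) · (∂^{r+s+1} f/∂w^{r+1}∂w̄^s)(w). In particular, if ∂f/∂w = 0 on U (f is anti-holomorphic on U), then (T_w^b f)(w) = Σ_{j=0}^b c_j w̄^j (∂^j f/∂w̄^j)(w) on U. -/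
/-!
Operators `∑ p_{r,s}(w, w̄) ∂^r ∂̄^s` with polynomial coefficients are mapped to operators of the
same kind by `T`: by the product rule `∂` and `∂̄` act on the coefficients as `∂/∂X` and `∂/∂Y`,
and `∂`, `∂̄` commute on smooth functions by the symmetry of the second derivative. Each
application of `T` raises the order by at most one, so `T^b` has order `≤ b`. Modulo `∂`, `T` acts
as `-(2i)⁻¹ w̄ ∂̄`, and `(w̄ ∂̄)^b = ∑_j S(b, j) w̄^j ∂̄^j` with `S` the Stirling numbers of the
second kind; hence `c_j = (-(2i)⁻¹)^b S(b, j)` and `c_b = (-(2i)⁻¹)^b ≠ 0`.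
-/

open Complex ComplexConjugate

noncomputable section

/-- The Wirtinger derivative `∂/∂w = (∂_x - i∂_y)/2`. -/
def wd (f : ℂ → ℂ) : ℂ → ℂ := fun w =>
  (1/2) * (fderiv ℝ f w 1 - Complex.I * fderiv ℝ f w Complex.I)

/-- The Wirtinger derivative `∂/∂w̄ = (∂_x + i∂_y)/2`. -/
def wdb (f : ℂ → ℂ) : ℂ → ℂ := fun w =>
  (1/2) * (fderiv ℝ f w 1 + Complex.I * fderiv ℝ f w Complex.I)

/-- The tangential operator `T_w = (1/(2i))(w ∂/∂w - w̄ ∂/∂w̄)`. -/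
def Tang (f : ℂ → ℂ) : ℂ → ℂ := fun w =>
  (2 * Complex.I)⁻¹ * (w * wd f w - conj w * wdb f w)

open MvPolynomial Set Topology

def wirtinger (a : ℂ) (f : ℂ → ℂ) (w : ℂ) : ℂ :=
  (1/2) * (fderiv ℝ f w 1 + a * fderiv ℝ f w I)

theorem wd_eq_wirtinger : wd = wirtinger (-I) := by
  ext f w
  simp only [wd, wirtinger, neg_mul, sub_eq_add_neg]

theorem wdb_eq_wirtinger : wdb = wirtinger I := rfl

theorem wd_apply (f : ℂ → ℂ) (w : ℂ) : wd f w = wirtinger (-I) f w := by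
  rw [wd_eq_wirtinger]

theorem wdb_apply (f : ℂ → ℂ) (w : ℂ) : wdb f w = wirtinger I f w := rfl

section Wirtinger

variable {a : ℂ} {f g : ℂ → ℂ} {U : Set ℂ} {w : ℂ}

theorem wirtinger_congr (h : f =ᶠ[𝓝 w] g) : wirtinger a f w = wirtinger a g w := by
  simp only [wirtinger, h.fderiv_eq]

theorem eqOn_wirtinger (hU : IsOpen U) (h : EqOn f g U) :
    EqOn (wirtinger a f) (wirtinger a g) U :=
  fun _ hw => wirtinger_congr (h.eventuallyEq_of_mem (hU.mem_nhds hw))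

theorem wirtinger_const (c : ℂ) : wirtinger a (fun _ => c) w = 0 := by
  simp [wirtinger]

theorem wirtinger_zero : wirtinger a 0 = 0 := by
  ext w
  exact wirtinger_const 0

theorem wirtinger_id : wirtinger a (fun x => x) w = (1 + a * I) / 2 := by
  simp [wirtinger]
  ring

theorem wirtinger_conj : wirtinger a (fun x => conj x) w = (1 - a * I) / 2 := by
  have hconj : fderiv ℝ (fun x => conj x) w = conjCLE.toContinuousLinearMap :=
    conjCLE.toContinuousLinearMap.hasFDerivAt.fderiv
  simp [wirtinger, hconj]
  ring

theorem wirtinger_add (hf : DifferentiableAt ℝ f w) (hg : DifferentiableAt ℝ g w) :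
    wirtinger a (fun x => f x + g x) w = wirtinger a f w + wirtinger a g w := by
  simp only [wirtinger, fderiv_fun_add hf hg, add_apply]
  ring

theorem wirtinger_mul (hf : DifferentiableAt ℝ f w) (hg : DifferentiableAt ℝ g w) :
    wirtinger a (fun x => f x * g x) w = wirtinger a f w * g w + f w * wirtinger a g w := by
  simp only [wirtinger, fderiv_fun_mul hf hg, add_apply, smul_apply, smul_eq_mul]
  ring

theorem wirtinger_sum {ι : Type*} (s : Finset ι) {F : ι → ℂ → ℂ}
    (hF : ∀ i ∈ s, DifferentiableAt ℝ (F i) w) :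
    wirtinger a (fun x => ∑ i ∈ s, F i x) w = ∑ i ∈ s, wirtinger a (F i) w := by
  simp only [wirtinger, fderiv_fun_sum hF, FunLike.coe_sum, Finset.sum_apply, Finset.mul_sum,
    ← Finset.sum_add_distrib]

theorem contDiffOn_wirtinger (hU : IsOpen U) (hf : ContDiffOn ℝ (⊤ : ℕ∞) f U) :
    ContDiffOn ℝ (⊤ : ℕ∞) (wirtinger a f) U := by
  have hDf := hf.fderiv_of_isOpen hU (m := (⊤ : ℕ∞)) (by simp)
  exact contDiffOn_const.mul ((hDf.clm_apply contDiffOn_const).add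
    (contDiffOn_const.mul (hDf.clm_apply contDiffOn_const)))

theorem fderiv_wirtinger_apply (hf : DifferentiableAt ℝ (fderiv ℝ f) w) (v : ℂ) :
    fderiv ℝ (wirtinger a f) w v =
      (1/2) * (fderiv ℝ (fderiv ℝ f) w v 1 + a * fderiv ℝ (fderiv ℝ f) w v I) := by
  have hD := hf.hasFDerivAt
  have h := ((hD.clm_apply (hasFDerivAt_const 1 w)).fun_add
    ((hD.clm_apply (hasFDerivAt_const I w)).const_mul a)).const_mul (1/2 : ℂ)
  rw [show wirtinger a f = fun x => (1/2) * (fderiv ℝ f x 1 + a * fderiv ℝ f x I) from rfl,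
    h.fderiv]
  simp
  ring

theorem wirtinger_comm (hU : IsOpen U) (hf : ContDiffOn ℝ (⊤ : ℕ∞) f U) (a b : ℂ) :
    EqOn (wirtinger a (wirtinger b f)) (wirtinger b (wirtinger a f)) U := by
  intro w hw
  have hfw := hf.contDiffAt (hU.mem_nhds hw)
  have hsym : IsSymmSndFDerivAt ℝ f w := hfw.isSymmSndFDerivAt (by
    rw [minSmoothness_of_isRCLikeNormedField]; exact WithTop.coe_le_coe.mpr le_top)
  have hD : DifferentiableAt ℝ (fderiv ℝ f) w :=
    ((hf.fderiv_of_isOpen hU (m := (⊤ : ℕ∞)) (by simp)).contDiffAt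
      (hU.mem_nhds hw)).differentiableAt (by simp)
  rw [wirtinger, wirtinger, fderiv_wirtinger_apply hD, fderiv_wirtinger_apply hD,
    fderiv_wirtinger_apply hD, fderiv_wirtinger_apply hD, hsym 1 I]
  ring

theorem contDiffOn_iterate_wirtinger (hU : IsOpen U) (hf : ContDiffOn ℝ (⊤ : ℕ∞) f U) (n : ℕ) :
    ContDiffOn ℝ (⊤ : ℕ∞) ((wirtinger a)^[n] f) U :=
  Function.Iterate.rec (fun g => ContDiffOn ℝ (⊤ : ℕ∞) g U) hf
    (fun _ hg => contDiffOn_wirtinger hU hg) n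

theorem eqOn_iterate_wirtinger (hU : IsOpen U) (h : EqOn f g U) (n : ℕ) :
    EqOn ((wirtinger a)^[n] f) ((wirtinger a)^[n] g) U := by
  induction n generalizing f g with
  | zero => exact h
  | succ n ih => exact ih (eqOn_wirtinger hU h)

theorem eqOn_iterate_wirtinger_zero (hU : IsOpen U) (h : EqOn f 0 U) (n : ℕ) :
    EqOn ((wirtinger a)^[n] f) 0 U := by
  simpa [Function.iterate_fixed wirtinger_zero] using eqOn_iterate_wirtinger (a := a) hU h n

theorem wirtinger_iterate_comm (hU : IsOpen U) (hf : ContDiffOn ℝ (⊤ : ℕ∞) f U) (a b : ℂ)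
    (n : ℕ) : EqOn (wirtinger a ((wirtinger b)^[n] f)) ((wirtinger b)^[n] (wirtinger a f)) U := by
  induction n generalizing f with
  | zero => exact fun _ _ => rfl
  | succ n ih =>
    exact (ih (contDiffOn_wirtinger hU hf)).trans
      (eqOn_iterate_wirtinger hU (wirtinger_comm hU hf a b) n)

end Wirtinger

def polyEval (p : MvPolynomial (Fin 2) ℂ) (w : ℂ) : ℂ :=
  eval ![w, conj w] p

section PolyEval

variable (p q : MvPolynomial (Fin 2) ℂ)

theorem polyEval_C (c : ℂ) : polyEval (C c) = fun _ => c := by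
  ext; simp [polyEval]

theorem polyEval_add : polyEval (p + q) = fun x => polyEval p x + polyEval q x := by
  ext; simp [polyEval]

theorem polyEval_mul : polyEval (p * q) = fun x => polyEval p x * polyEval q x := by
  ext; simp [polyEval]

theorem polyEval_X_zero : polyEval (X 0) = fun x => x := by
  ext; simp [polyEval]

theorem polyEval_X_one : polyEval (X 1) = fun x => conj x := by
  ext; simp [polyEval]

theorem differentiable_polyEval : Differentiable ℝ (polyEval p) := by
  induction p using MvPolynomial.induction_on with
  | C c => simp [polyEval_C]
  | add p q hp hq => rw [polyEval_add]; exact hp.add hq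
  | mul_X p i hp =>
    rw [polyEval_mul]
    refine hp.mul ?_
    revert i
    rw [Fin.forall_fin_two, polyEval_X_zero, polyEval_X_one]
    exact ⟨differentiable_id, conjCLE.differentiable⟩

theorem wirtinger_polyEval (a w : ℂ) :
    wirtinger a (polyEval p) w =
      polyEval (pderiv 0 p) w * ((1 + a * I) / 2) +
        polyEval (pderiv 1 p) w * ((1 - a * I) / 2) := by
  induction p using MvPolynomial.induction_on with
  | C c => simp [polyEval, polyEval_C, wirtinger_const]
  | add p q hp hq =>
    rw [polyEval_add, wirtinger_add (differentiable_polyEval p w) (differentiable_polyEval q w),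
      hp, hq, map_add, map_add, polyEval_add, polyEval_add]
    ring
  | mul_X p i hp =>
    rw [polyEval_mul, wirtinger_mul (differentiable_polyEval p w) (differentiable_polyEval _ w),
      hp, pderiv_mul, pderiv_mul, polyEval_add, polyEval_add, polyEval_mul, polyEval_mul,
      polyEval_mul, polyEval_mul]
    revert i
    rw [Fin.forall_fin_two, polyEval_X_zero, polyEval_X_one]
    constructor
    · simp [polyEval, wirtinger_id, pderiv_X]
      ring
    · simp [polyEval, wirtinger_conj, pderiv_X]
      ring

end PolyEval

section Smooth

variable {U : Set ℂ} {f g : ℂ → ℂ}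

theorem contDiffOn_wd_iterate_wdb_iterate (hU : IsOpen U) (hf : ContDiffOn ℝ (⊤ : ℕ∞) f U)
    (r s : ℕ) : ContDiffOn ℝ (⊤ : ℕ∞) (wd^[r] (wdb^[s] f)) U := by
  rw [wd_eq_wirtinger, wdb_eq_wirtinger]
  exact contDiffOn_iterate_wirtinger hU (contDiffOn_iterate_wirtinger hU hf s) r

theorem wdb_wd_iterate_comm (hU : IsOpen U) (hf : ContDiffOn ℝ (⊤ : ℕ∞) f U) (r : ℕ) :
    EqOn (wdb (wd^[r] f)) (wd^[r] (wdb f)) U := by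
  rw [wd_eq_wirtinger, wdb_eq_wirtinger]
  exact wirtinger_iterate_comm hU hf _ _ r

theorem wd_wdb_iterate_comm (hU : IsOpen U) (hf : ContDiffOn ℝ (⊤ : ℕ∞) f U) (s : ℕ) :
    EqOn (wd (wdb^[s] f)) (wdb^[s] (wd f)) U := by
  rw [wd_eq_wirtinger, wdb_eq_wirtinger]
  exact wirtinger_iterate_comm hU hf _ _ s

theorem eqOn_wd_iterate_succ_wdb_iterate_zero (hU : IsOpen U) (hf : ContDiffOn ℝ (⊤ : ℕ∞) f U)
    (h : EqOn (wd f) 0 U) (r s : ℕ) : EqOn (wd^[r + 1] (wdb^[s] f)) 0 U := by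
  have h1 : EqOn (wd (wdb^[s] f)) 0 U := (wd_wdb_iterate_comm hU hf s).trans (by
    rw [wdb_eq_wirtinger]; exact eqOn_iterate_wirtinger_zero hU h s)
  rw [Function.iterate_succ_apply]
  rw [wd_eq_wirtinger] at h1 ⊢
  exact eqOn_iterate_wirtinger_zero hU h1 r

theorem eqOn_Tang (hU : IsOpen U) (h : EqOn f g U) : EqOn (Tang f) (Tang g) U := by
  intro w hw
  simp only [Tang, wd_apply, wdb_apply, eqOn_wirtinger hU h hw]

end Smooth

/-- `P` encodes the operator `f ↦ ∑ P (r, s) (w, w̄) ∂^r ∂̄^s f`, with `X 0 = w` and `X 1 = w̄`. -/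
abbrev WirtingerOp := (ℕ × ℕ) →₀ MvPolynomial (Fin 2) ℂ

namespace WirtingerOp

def applyTo (P : WirtingerOp) (f : ℂ → ℂ) (w : ℂ) : ℂ :=
  P.sum fun rs p => polyEval p w * wd^[rs.1] (wdb^[rs.2] f) w

def derivW (P : WirtingerOp) : WirtingerOp :=
  Finsupp.mapRange (pderiv (R := ℂ) (0 : Fin 2)) (map_zero _) P +
    Finsupp.mapDomain (Prod.map (· + 1) id) P

def derivWbar (P : WirtingerOp) : WirtingerOp :=
  Finsupp.mapRange (pderiv (R := ℂ) (1 : Fin 2)) (map_zero _) P +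
    Finsupp.mapDomain (Prod.map id (· + 1)) P

def tang (P : WirtingerOp) : WirtingerOp :=
  (C (2 * I)⁻¹ : MvPolynomial (Fin 2) ℂ) •
    ((X 0 : MvPolynomial (Fin 2) ℂ) • derivW P - (X 1 : MvPolynomial (Fin 2) ℂ) • derivWbar P)

def HasOrderLE (P : WirtingerOp) (n : ℕ) : Prop := ∀ r s, n < r + s → P (r, s) = 0

section Apply

variable {U : Set ℂ} {f : ℂ → ℂ} {w : ℂ} (P Q : WirtingerOp)

theorem applyTo_single (rs : ℕ × ℕ) (p : MvPolynomial (Fin 2) ℂ) :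
    applyTo (Finsupp.single rs p) f w = polyEval p w * wd^[rs.1] (wdb^[rs.2] f) w :=
  Finsupp.sum_single_index (by simp [polyEval])

theorem applyTo_add : applyTo (P + Q) f w = applyTo P f w + applyTo Q f w :=
  Finsupp.sum_add_index' (by simp [polyEval]) (by simp [polyEval, add_mul])

theorem applyTo_sub : applyTo (P - Q) f w = applyTo P f w - applyTo Q f w :=
  Finsupp.sum_sub_index (by simp [polyEval, sub_mul])

theorem applyTo_smul (a : MvPolynomial (Fin 2) ℂ) :
    applyTo (a • P) f w = polyEval a w * applyTo P f w := by
  rw [applyTo, Finsupp.sum_smul_index' (by simp [polyEval]), applyTo, Finsupp.mul_sum]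
  simp [polyEval, mul_assoc]

theorem wirtinger_applyTo (a : ℂ) (hU : IsOpen U) (hf : ContDiffOn ℝ (⊤ : ℕ∞) f U)
    (hw : w ∈ U) : wirtinger a (applyTo P f) w = P.sum fun rs p =>
      wirtinger a (polyEval p) w * wd^[rs.1] (wdb^[rs.2] f) w +
        polyEval p w * wirtinger a (wd^[rs.1] (wdb^[rs.2] f)) w := by
  have hD (rs : ℕ × ℕ) : DifferentiableAt ℝ (wd^[rs.1] (wdb^[rs.2] f)) w :=
    ((contDiffOn_wd_iterate_wdb_iterate hU hf _ _).contDiffAt (hU.mem_nhds hw)).differentiableAt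
      (by simp)
  exact (wirtinger_sum _ fun rs _ => (differentiable_polyEval _ w).mul (hD rs)).trans
    (Finset.sum_congr rfl fun rs _ => wirtinger_mul (differentiable_polyEval _ w) (hD rs))

theorem applyTo_derivW (hU : IsOpen U) (hf : ContDiffOn ℝ (⊤ : ℕ∞) f U) (hw : w ∈ U) :
    applyTo (derivW P) f w = wd (applyTo P f) w := by
  rw [derivW, applyTo_add, applyTo, applyTo, Finsupp.sum_mapRange_index (by simp [polyEval]),
    Finsupp.sum_mapDomain_index (by simp [polyEval]) (by simp [polyEval, add_mul]),
    ← Finsupp.sum_add, wd_apply, wirtinger_applyTo P _ hU hf hw]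
  refine Finsupp.sum_congr fun rs _ => ?_
  rw [wirtinger_polyEval, ← wd_apply, Prod.map_fst, Prod.map_snd, id,
    ← Function.iterate_succ_apply' wd]
  simp [I_mul_I]

theorem applyTo_derivWbar (hU : IsOpen U) (hf : ContDiffOn ℝ (⊤ : ℕ∞) f U) (hw : w ∈ U) :
    applyTo (derivWbar P) f w = wdb (applyTo P f) w := by
  rw [derivWbar, applyTo_add, applyTo, applyTo, Finsupp.sum_mapRange_index (by simp [polyEval]),
    Finsupp.sum_mapDomain_index (by simp [polyEval]) (by simp [polyEval, add_mul]),
    ← Finsupp.sum_add, wdb_apply, wirtinger_applyTo P _ hU hf hw]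
  refine Finsupp.sum_congr fun rs _ => ?_
  rw [wirtinger_polyEval, ← wdb_apply,
    wdb_wd_iterate_comm hU (f := wdb^[rs.2] f) (contDiffOn_wd_iterate_wdb_iterate hU hf 0 rs.2)
      rs.1 hw,
    Prod.map_fst, Prod.map_snd, id, ← Function.iterate_succ_apply' wdb]
  simp [I_mul_I]

theorem applyTo_tang (hU : IsOpen U) (hf : ContDiffOn ℝ (⊤ : ℕ∞) f U) (hw : w ∈ U) :
    applyTo (tang P) f w = Tang (applyTo P f) w := by
  rw [tang, applyTo_smul, applyTo_sub, applyTo_smul, applyTo_smul, applyTo_derivW P hU hf hw,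
    applyTo_derivWbar P hU hf hw]
  simp [polyEval, Tang]

theorem eqOn_Tang_iterate (hU : IsOpen U) (hf : ContDiffOn ℝ (⊤ : ℕ∞) f U) (b : ℕ) :
    EqOn (Tang^[b] f) (applyTo (tang^[b] (Finsupp.single (0, 0) 1)) f) U := by
  induction b with
  | zero => intro w _; simp [applyTo_single, polyEval]
  | succ b ih =>
    intro w hw
    rw [Function.iterate_succ_apply', Function.iterate_succ_apply', applyTo_tang _ hU hf hw]
    exact eqOn_Tang hU ih hw

theorem HasOrderLE.applyTo_eq_sum_range {n : ℕ} (hP : HasOrderLE P n) (f : ℂ → ℂ) (w : ℂ) :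
    applyTo P f w =
      (∑ s ∈ Finset.range (n + 1), polyEval (P (0, s)) w * wdb^[s] f w) +
        ∑ r ∈ Finset.range (n + 1), ∑ s ∈ Finset.range (n + 1),
          polyEval (P (r + 1, s)) w * wd^[r + 1] (wdb^[s] f) w := by
  have hsupp : P.support ⊆ Finset.range (n + 2) ×ˢ Finset.range (n + 1) := by
    intro rs hrs
    have := mt (hP rs.1 rs.2) (Finsupp.mem_support_iff.mp hrs)
    simp only [Finset.mem_product, Finset.mem_range]
    omega
  rw [applyTo, Finsupp.sum_of_support_subset P hsupp _ (by simp [polyEval]), Finset.sum_product,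
    Finset.sum_range_succ', add_comm]
  rfl

end Apply

section Coefficients

variable (P : WirtingerOp)

theorem derivW_apply_zero (s : ℕ) : derivW P (0, s) = pderiv 0 (P (0, s)) := by
  rw [derivW, Finsupp.add_apply, Finsupp.mapDomain_of_notMem_range _ _ (by simp),
    Finsupp.mapRange_apply, add_zero]

theorem derivW_apply_succ (r s : ℕ) :
    derivW P (r + 1, s) = pderiv 0 (P (r + 1, s)) + P (r, s) := by
  rw [derivW, Finsupp.add_apply, Finsupp.mapRange_apply,
    ← Finsupp.mapDomain_apply ((add_left_injective 1).prodMap Function.injective_id) P (r, s)]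
  rfl

theorem derivWbar_apply_zero (r : ℕ) : derivWbar P (r, 0) = pderiv 1 (P (r, 0)) := by
  rw [derivWbar, Finsupp.add_apply, Finsupp.mapDomain_of_notMem_range _ _ (by simp),
    Finsupp.mapRange_apply, add_zero]

theorem derivWbar_apply_succ (r s : ℕ) :
    derivWbar P (r, s + 1) = pderiv 1 (P (r, s + 1)) + P (r, s) := by
  rw [derivWbar, Finsupp.add_apply, Finsupp.mapRange_apply,
    ← Finsupp.mapDomain_apply (Function.injective_id.prodMap (add_left_injective 1)) P (r, s)]
  rfl

theorem tang_apply (rs : ℕ × ℕ) :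
    tang P rs = C (2 * I)⁻¹ * (X 0 * derivW P rs - X 1 * derivWbar P rs) := rfl

variable {P}

theorem HasOrderLE.tang {n : ℕ} (hP : HasOrderLE P n) : HasOrderLE (tang P) (n + 1) := by
  intro r s hrs
  have hW : derivW P (r, s) = 0 := by
    cases r with
    | zero => rw [derivW_apply_zero, hP 0 s (by omega), map_zero]
    | succ r => rw [derivW_apply_succ, hP _ s (by omega), hP r s (by omega), map_zero, add_zero]
  have hWbar : derivWbar P (r, s) = 0 := by
    cases s with
    | zero => rw [derivWbar_apply_zero, hP r 0 (by omega), map_zero]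
    | succ s =>
      rw [derivWbar_apply_succ, hP r _ (by omega), hP r s (by omega), map_zero, add_zero]
  rw [tang_apply, hW, hWbar]
  simp

theorem hasOrderLE_tang_iterate (b : ℕ) :
    HasOrderLE (tang^[b] (Finsupp.single (0, 0) 1)) b := by
  induction b with
  | zero => intro r s hrs; simp [Finsupp.single_apply]; omega
  | succ b ih => rw [Function.iterate_succ_apply']; exact ih.tang

theorem tang_apply_zero_zero {c : ℂ} (hP : P (0, 0) = C c) : tang P (0, 0) = 0 := by
  rw [tang_apply, derivW_apply_zero, derivWbar_apply_zero, hP]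
  simp

theorem tang_apply_zero_succ {s : ℕ} {c c' : ℂ} (hP : P (0, s + 1) = C c * X 1 ^ (s + 1))
    (hP' : P (0, s) = C c' * X 1 ^ s) :
    tang P (0, s + 1) = C (-(2 * I)⁻¹ * ((s + 1) * c + c')) * X 1 ^ (s + 1) := by
  rw [tang_apply, derivW_apply_zero, derivWbar_apply_succ, hP, hP']
  simp [pderiv_X]
  ring

theorem tang_iterate_apply_zero (b s : ℕ) :
    (tang^[b] (Finsupp.single (0, 0) 1)) (0, s) =
      C ((-(2 * I)⁻¹) ^ b * Nat.stirlingSecond b s) * X 1 ^ s := by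
  induction b generalizing s with
  | zero => cases s <;> simp
  | succ b ih =>
    rw [Function.iterate_succ_apply']
    cases s with
    | zero => simp [tang_apply_zero_zero ((ih 0).trans (by rw [pow_zero, mul_one]))]
    | succ s =>
      rw [tang_apply_zero_succ (ih (s + 1)) (ih s), Nat.stirlingSecond_succ_succ]
      push_cast
      congr 2
      ring

end Coefficients

end WirtingerOp

open WirtingerOp

/-- `T_w^b ≡ Σ_{j=0}^b c_j w̄^j ∂^j/∂w̄^j (mod ∂/∂w)`, with `c_b ≠ 0`, where the
error term is a combination `Σ_{r,s≤b} q_{r,s}(w,w̄) ∂^{r+s+1}/∂w^{r+1}∂w̄^s`; in particular,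
on anti-holomorphic functions `T_w^b = Σ_{j=0}^b c_j w̄^j ∂^j/∂w̄^j`. -/
theorem tangential_power_mod_holomorphic_derivative (b : ℕ) :
    ∃ c : ℕ → ℂ, c b ≠ 0 ∧ ∃ q : ℕ → ℕ → MvPolynomial (Fin 2) ℂ,
      (∀ U : Set ℂ, IsOpen U → ∀ f : ℂ → ℂ, ContDiffOn ℝ (⊤ : ℕ∞) f U → ∀ w ∈ U,
        Tang^[b] f w =
          (∑ j ∈ Finset.range (b+1), c j * (conj w) ^ j * wdb^[j] f w) +
            ∑ r ∈ Finset.range (b+1), ∑ s ∈ Finset.range (b+1),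
              MvPolynomial.eval ![w, conj w] (q r s) * wd^[r+1] (wdb^[s] f) w) ∧
      (∀ U : Set ℂ, IsOpen U → ∀ f : ℂ → ℂ, ContDiffOn ℝ (⊤ : ℕ∞) f U →
        (∀ w ∈ U, wd f w = 0) → ∀ w ∈ U,
          Tang^[b] f w = ∑ j ∈ Finset.range (b+1), c j * (conj w) ^ j * wdb^[j] f w) := by
  set P := tang^[b] (Finsupp.single (0, 0) 1)
  set c : ℕ → ℂ := fun j => (-(2 * I)⁻¹) ^ b * Nat.stirlingSecond b j
  have hmain (U : Set ℂ) (hU : IsOpen U) (f : ℂ → ℂ) (hf : ContDiffOn ℝ (⊤ : ℕ∞) f U) (w : ℂ)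
      (hw : w ∈ U) : Tang^[b] f w =
        (∑ j ∈ Finset.range (b+1), c j * (conj w) ^ j * wdb^[j] f w) +
          ∑ r ∈ Finset.range (b+1), ∑ s ∈ Finset.range (b+1),
            MvPolynomial.eval ![w, conj w] (P (r + 1, s)) * wd^[r+1] (wdb^[s] f) w := by
    rw [eqOn_Tang_iterate hU hf b hw, (hasOrderLE_tang_iterate b).applyTo_eq_sum_range]
    congr 1
    refine Finset.sum_congr rfl fun j _ => ?_
    simp [c, tang_iterate_apply_zero, polyEval]
  refine ⟨c, by simp [c, Nat.stirlingSecond_self, I_ne_zero], _, hmain, ?_⟩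
  intro U hU f hf hhol w hw
  rw [hmain U hU f hf w hw, add_eq_left]
  refine Finset.sum_eq_zero fun r _ => Finset.sum_eq_zero fun s _ => ?_
  rw [eqOn_wd_iterate_succ_wdb_iterate_zero hU hf hhol r s hw, Pi.zero_apply, mul_zero]
end
end

section
/- Let k ∈ ℕ and p ∈ (1, ∞). For every function f : D* → ℂ that is C^∞-smooth on D* with Σ_{|α|≤k} ∫_{D*} |D^α f(w)|^p |w|² dA(w) < ∞, and for every ε > 0, there exists a function g : ℂ → ℂ that is C^∞-smooth on an open set containing D̄∖{0} (the closed unit disc minus the origin) such that Σ_{|α|≤k} ∫_{D*} |D^α(f − g)(w)|^p |w|² dA(w) < ε. In other words, C^∞(D̄∖{0}) ∩ W^{k,p}(D*, |w|²) is dense in the weighted Sobolev space W^{k,p}(D*, |w|²). -/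
open MeasureTheory Complex ComplexConjugate

noncomputable section

/-- The open unit disc. -/
def unitD : Set ℂ := Metric.ball 0 1

/-- The punctured unit disc. -/
def unitDstar : Set ℂ := unitD \ {0}

/-- `D^α = ∂^{|α|}/∂w^{α₁}∂w̄^{α₂}`. -/
def Dop (α : ℕ × ℕ) (f : ℂ → ℂ) : ℂ → ℂ := wd^[α.1] (wdb^[α.2] f)

/-- Multi-indices `(α₁,α₂)` with `α₁ + α₂ ≤ k`. -/
def multiIdx (k : ℕ) : Finset (ℕ × ℕ) :=
  (Finset.range (k+1) ×ˢ Finset.range (k+1)).filter (fun α => α.1 + α.2 ≤ k)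

/-!
The approximants are the dilations `f (r ·)` with `r < 1`, which are smooth near `D̄ ∖ {0}`.
Since `D^α (f (r ·)) = r^{|α|} (D^α f) (r ·)`, it suffices that `h ↦ r^m h (r ·)` tends to the
identity on `L^p(D*, |w|² dA)` as `r → 1⁻`. This holds for bounded continuous `h` by dominated
convergence; the dilations with `r ≥ 1/2` are uniformly bounded on `L^p` by a change of
variables; and bounded continuous functions are dense in `L^p`.
-/

open Set Filter Topology
open scoped ENNReal BoundedContinuousFunction

def dilate (m : ℕ) (r : ℝ) (h : ℂ → ℂ) : ℂ → ℂ := fun w => (r : ℂ) ^ m * h (r * w)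

lemma dilate_sub (m : ℕ) (r : ℝ) (u v : ℂ → ℂ) :
    dilate m r (u - v) = dilate m r u - dilate m r v := by
  funext w; simp only [dilate, Pi.sub_apply]; ring

lemma ContDiffOn.comp_ofReal_mul {n : WithTop ℕ∞} {s : Set ℂ} {u : ℂ → ℂ}
    (hu : ContDiffOn ℝ n u s) (r : ℝ) : ContDiffOn ℝ n (fun z => u (r * z)) {z | r * z ∈ s} :=
  hu.comp (by fun_prop) fun _ hz => hz

def wirtingerOp (e : ℂ) (f : ℂ → ℂ) : ℂ → ℂ := fun w =>
  (1/2) * (fderiv ℝ f w 1 + e * fderiv ℝ f w I)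

lemma wd_eq_wirtingerOp : wd = wirtingerOp (-I) := by
  funext f w; simp only [wd, wirtingerOp]; ring

lemma wdb_eq_wirtingerOp : wdb = wirtingerOp I := rfl

section wirtingerOp

open scoped ContDiff

variable {e : ℂ} {s : Set ℂ} {u v : ℂ → ℂ}

lemma wirtingerOp_congr (hs : IsOpen s) (h : EqOn u v s) :
    EqOn (wirtingerOp e u) (wirtingerOp e v) s := fun w hw => by
  simp only [wirtingerOp, (h.eventuallyEq_of_mem (hs.mem_nhds hw)).fderiv_eq]

lemma iterate_wirtingerOp_congr (hs : IsOpen s) (h : EqOn u v s) (n : ℕ) :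
    EqOn ((wirtingerOp e)^[n] u) ((wirtingerOp e)^[n] v) s := by
  induction n with
  | zero => exact h
  | succ n ih => simpa only [Function.iterate_succ_apply'] using wirtingerOp_congr hs ih

lemma wirtingerOp_sub {w : ℂ} (hu : DifferentiableAt ℝ u w) (hv : DifferentiableAt ℝ v w) :
    wirtingerOp e (u - v) w = wirtingerOp e u w - wirtingerOp e v w := by
  simp only [wirtingerOp, fderiv_sub hu hv, sub_apply]
  ring

lemma wirtingerOp_const_mul (c : ℂ) {w : ℂ} (hu : DifferentiableAt ℝ u w) :
    wirtingerOp e (fun z => c * u z) w = c * wirtingerOp e u w := by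
  simp only [wirtingerOp, fderiv_const_mul hu c, smul_apply, smul_eq_mul]
  ring

lemma wirtingerOp_comp_ofReal_mul (r : ℝ) {w : ℂ} (hu : DifferentiableAt ℝ u (r * w)) :
    wirtingerOp e (fun z => u (r * z)) w = r * wirtingerOp e u (r * w) := by
  have hcomp : (fun z => u (r * z)) = u ∘ (r • ContinuousLinearMap.id ℝ ℂ) := by
    funext z; simp [Complex.real_smul]
  rw [wirtingerOp, wirtingerOp, hcomp, fderiv_comp _ (by simpa [Complex.real_smul] using hu)
    (ContinuousLinearMap.differentiableAt _), ContinuousLinearMap.fderiv]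
  simp only [ContinuousLinearMap.comp_apply, smul_apply, ContinuousLinearMap.id_apply, map_smul]
  simp only [Complex.real_smul]
  ring

lemma contDiffOn_wirtingerOp (hs : IsOpen s) (hu : ContDiffOn ℝ ∞ u s) :
    ContDiffOn ℝ ∞ (wirtingerOp e u) s := by
  have hDu := hu.fderiv_of_isOpen hs (m := ∞) le_rfl
  exact contDiffOn_const.mul ((hDu.clm_apply contDiffOn_const).add
    (contDiffOn_const.mul (hDu.clm_apply contDiffOn_const)))

lemma contDiffOn_iterate_wirtingerOp (hs : IsOpen s) (hu : ContDiffOn ℝ ∞ u s) (n : ℕ) :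
    ContDiffOn ℝ ∞ ((wirtingerOp e)^[n] u) s := by
  induction n with
  | zero => exact hu
  | succ n ih => simpa only [Function.iterate_succ_apply'] using contDiffOn_wirtingerOp hs ih

lemma differentiableAt_iterate_wirtingerOp (hs : IsOpen s) (hu : ContDiffOn ℝ ∞ u s) (n : ℕ)
    {w : ℂ} (hw : w ∈ s) : DifferentiableAt ℝ ((wirtingerOp e)^[n] u) w :=
  ((contDiffOn_iterate_wirtingerOp hs hu n).differentiableOn (by simp)).differentiableAt
    (hs.mem_nhds hw)

lemma iterate_wirtingerOp_sub (hs : IsOpen s) (hu : ContDiffOn ℝ ∞ u s)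
    (hv : ContDiffOn ℝ ∞ v s) (n : ℕ) :
    EqOn ((wirtingerOp e)^[n] (u - v)) ((wirtingerOp e)^[n] u - (wirtingerOp e)^[n] v) s := by
  induction n with
  | zero => exact fun _ _ => rfl
  | succ n ih =>
    intro w hw
    simp only [Function.iterate_succ_apply', Pi.sub_apply]
    rw [wirtingerOp_congr hs ih hw,
      wirtingerOp_sub (differentiableAt_iterate_wirtingerOp hs hu n hw)
        (differentiableAt_iterate_wirtingerOp hs hv n hw)]

lemma iterate_wirtingerOp_const_mul (hs : IsOpen s) (hu : ContDiffOn ℝ ∞ u s) (c : ℂ) (n : ℕ) :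
    EqOn ((wirtingerOp e)^[n] (fun z => c * u z)) (fun z => c * (wirtingerOp e)^[n] u z) s := by
  induction n with
  | zero => exact fun _ _ => rfl
  | succ n ih =>
    intro w hw
    simp only [Function.iterate_succ_apply']
    rw [wirtingerOp_congr hs ih hw,
      wirtingerOp_const_mul _ (differentiableAt_iterate_wirtingerOp hs hu n hw)]

lemma iterate_wirtingerOp_comp_ofReal_mul (hs : IsOpen s) (hu : ContDiffOn ℝ ∞ u s) (r : ℝ)
    (n : ℕ) : EqOn ((wirtingerOp e)^[n] (fun z => u (r * z)))
      (dilate n r ((wirtingerOp e)^[n] u)) {z | r * z ∈ s} := by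
  induction n with
  | zero => intro w _; simp [dilate]
  | succ n ih =>
    intro w hw
    have hT : IsOpen {z : ℂ | r * z ∈ s} := hs.preimage (continuous_const_mul _)
    have hdiff := differentiableAt_iterate_wirtingerOp (e := e) hs hu n hw
    have hdiff_comp : DifferentiableAt ℝ (fun z => (wirtingerOp e)^[n] u (r * z)) w :=
      hdiff.comp w (by fun_prop)
    simp only [Function.iterate_succ_apply']
    rw [wirtingerOp_congr hT ih hw]
    unfold dilate
    rw [wirtingerOp_const_mul _ hdiff_comp, wirtingerOp_comp_ofReal_mul r hdiff]
    ring

end wirtingerOp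

section Dop

open scoped ContDiff

variable {s : Set ℂ} {f g : ℂ → ℂ}

lemma Dop_eq_iterate_wirtingerOp (α : ℕ × ℕ) (f : ℂ → ℂ) :
    Dop α f = (wirtingerOp (-I))^[α.1] ((wirtingerOp I)^[α.2] f) := by
  rw [Dop, wd_eq_wirtingerOp, wdb_eq_wirtingerOp]

lemma contDiffOn_Dop (hs : IsOpen s) (hf : ContDiffOn ℝ ∞ f s) (α : ℕ × ℕ) :
    ContDiffOn ℝ ∞ (Dop α f) s := by
  rw [Dop_eq_iterate_wirtingerOp]
  exact contDiffOn_iterate_wirtingerOp hs (contDiffOn_iterate_wirtingerOp hs hf _) _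

lemma Dop_sub (hs : IsOpen s) (hf : ContDiffOn ℝ ∞ f s) (hg : ContDiffOn ℝ ∞ g s)
    (α : ℕ × ℕ) : EqOn (Dop α (f - g)) (Dop α f - Dop α g) s := by
  simp only [Dop_eq_iterate_wirtingerOp]
  exact (iterate_wirtingerOp_congr hs (iterate_wirtingerOp_sub hs hf hg _) _).trans
    (iterate_wirtingerOp_sub hs (contDiffOn_iterate_wirtingerOp hs hf _)
      (contDiffOn_iterate_wirtingerOp hs hg _) _)

lemma Dop_comp_ofReal_mul (hs : IsOpen s) (hf : ContDiffOn ℝ ∞ f s) (r : ℝ) (α : ℕ × ℕ) :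
    EqOn (Dop α (fun z => f (r * z))) (dilate (α.1 + α.2) r (Dop α f)) {z | r * z ∈ s} := by
  have hT : IsOpen {z : ℂ | r * z ∈ s} := hs.preimage (continuous_const_mul _)
  have hf' := contDiffOn_iterate_wirtingerOp (e := I) hs hf α.2
  simp only [Dop_eq_iterate_wirtingerOp]
  intro w hw
  rw [iterate_wirtingerOp_congr hT (iterate_wirtingerOp_comp_ofReal_mul hs hf r _) _ hw]
  unfold dilate
  rw [iterate_wirtingerOp_const_mul hT (hf'.comp_ofReal_mul r) _ _ hw]
  dsimp only
  rw [iterate_wirtingerOp_comp_ofReal_mul hs hf' r _ hw, dilate]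
  ring

end Dop

lemma lintegral_comp_smul_addHaar {E : Type*} [NormedAddCommGroup E] [NormedSpace ℝ E]
    [MeasurableSpace E] [BorelSpace E] [FiniteDimensional ℝ E] (μ : Measure E)
    [μ.IsAddHaarMeasure] {r : ℝ} (hr : r ≠ 0) (F : E → ℝ≥0∞) :
    ∫⁻ x, F (r • x) ∂μ = ENNReal.ofReal |(r ^ Module.finrank ℝ E)⁻¹| * ∫⁻ x, F x ∂μ := by
  rw [← smul_eq_mul, ← lintegral_smul_measure, ← Measure.map_addHaar_smul μ hr]
  exact (lintegral_map_equiv F (MeasurableEquiv.smul₀ r hr)).symm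

lemma isOpen_unitDstar : IsOpen unitDstar :=
  Metric.isOpen_ball.sdiff isClosed_singleton

lemma measurableSet_unitDstar : MeasurableSet unitDstar :=
  isOpen_unitDstar.measurableSet

lemma mem_unitDstar_iff {w : ℂ} : w ∈ unitDstar ↔ ‖w‖ < 1 ∧ w ≠ 0 := by
  simp [unitDstar, unitD]

lemma norm_ofReal_mul {r : ℝ} (hr : 0 ≤ r) (w : ℂ) : ‖(r : ℂ) * w‖ = r * ‖w‖ := by
  rw [norm_mul, Complex.norm_of_nonneg hr]

lemma mapsTo_ofReal_mul_unitDstar {r : ℝ} (hr0 : 0 < r) (hr1 : r ≤ 1) :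
    MapsTo (fun w : ℂ => (r : ℂ) * w) unitDstar unitDstar := fun w hw => by
  rw [mem_unitDstar_iff] at hw ⊢
  refine ⟨?_, mul_ne_zero (by exact_mod_cast hr0.ne') hw.2⟩
  rw [norm_ofReal_mul hr0.le]
  nlinarith [norm_nonneg w]

lemma closedBall_diff_zero_subset_preimage_unitDstar {r : ℝ} (hr0 : 0 < r) (hr1 : r < 1) :
    Metric.closedBall (0 : ℂ) 1 \ {0} ⊆ {w : ℂ | (r : ℂ) * w ∈ unitDstar} := fun w hw => by
  rw [mem_ofPred_eq, mem_unitDstar_iff, norm_ofReal_mul hr0.le]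
  have hw1 : ‖w‖ ≤ 1 := by simpa using hw.1
  exact ⟨by nlinarith [norm_nonneg w], mul_ne_zero (by exact_mod_cast hr0.ne') hw.2⟩

def weightedVolume : Measure ℂ :=
  (volume.restrict unitDstar).withDensity fun w => ENNReal.ofReal (‖w‖ ^ 2)

lemma lintegral_weightedVolume (F : ℂ → ℝ≥0∞) :
    ∫⁻ w, F w ∂weightedVolume = ∫⁻ w in unitDstar, ENNReal.ofReal (‖w‖ ^ 2) * F w :=
  lintegral_withDensity_eq_lintegral_mul_non_measurable _ (by fun_prop)
    (ae_of_all _ fun _ => ENNReal.ofReal_lt_top) F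

instance : IsFiniteMeasure weightedVolume := by
  refine isFiniteMeasure_withDensity (ne_top_of_le_ne_top (measure_ball_lt_top (μ := volume)
    (x := (0 : ℂ)) (r := 1)).ne ?_)
  calc ∫⁻ w in unitDstar, ENNReal.ofReal (‖w‖ ^ 2)
      ≤ ∫⁻ _ in unitDstar, 1 := setLIntegral_mono (by fun_prop) fun w hw => by
        rw [mem_unitDstar_iff] at hw
        exact ENNReal.ofReal_le_one.2 (pow_le_one₀ (norm_nonneg w) hw.1.le)
    _ ≤ volume (Metric.ball (0 : ℂ) 1) := by
        rw [setLIntegral_one]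
        exact measure_mono sdiff_subset

lemma ContinuousOn.aestronglyMeasurable_weightedVolume {u : ℂ → ℂ}
    (hu : ContinuousOn u unitDstar) : AEStronglyMeasurable u weightedVolume :=
  (hu.aestronglyMeasurable measurableSet_unitDstar).mono_ac
    (withDensity_absolutelyContinuous _ _)

lemma setLIntegral_unitDstar_eq_eLpNorm_rpow {p : ℝ} (hp : 0 < p) (u : ℂ → ℂ) :
    ∫⁻ w in unitDstar, ENNReal.ofReal (‖u w‖ ^ p * ‖w‖ ^ (2:ℕ)) =
      eLpNorm u (ENNReal.ofReal p) weightedVolume ^ p := by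
  rw [eLpNorm_eq_lintegral_rpow_enorm_toReal (by simpa using hp) ENNReal.ofReal_ne_top,
    ENNReal.toReal_ofReal hp.le, ← ENNReal.rpow_mul, one_div, inv_mul_cancel₀ hp.ne',
    ENNReal.rpow_one, lintegral_weightedVolume]
  refine setLIntegral_congr_fun measurableSet_unitDstar fun w _ => ?_
  rw [ENNReal.ofReal_mul (by positivity), mul_comm,
    ← ENNReal.ofReal_rpow_of_nonneg (norm_nonneg _) hp.le, ofReal_norm]

-- One factor `r⁻²` is the Jacobian of `w ↦ r w`, the other comes from the weight `|w|²`.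
lemma lintegral_comp_ofReal_mul_le {r : ℝ} (hr0 : 0 < r) (hr1 : r ≤ 1) (F : ℂ → ℝ≥0∞) :
    ∫⁻ w, F (r * w) ∂weightedVolume ≤ ENNReal.ofReal (r ^ 4)⁻¹ * ∫⁻ w, F w ∂weightedVolume := by
  set G := unitDstar.indicator fun w => ENNReal.ofReal (‖w‖ ^ 2) * F w with hG
  have hpointwise : ∀ w, unitDstar.indicator (fun w => ENNReal.ofReal (‖w‖ ^ 2) * F (r * w)) w
      ≤ ENNReal.ofReal (r ^ 2)⁻¹ * G (r • w) := fun w => by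
    by_cases hw : w ∈ unitDstar
    · have hrw : (r : ℂ) * w ∈ unitDstar := mapsTo_ofReal_mul_unitDstar hr0 hr1 hw
      have hweight : ENNReal.ofReal (r ^ 2)⁻¹ * ENNReal.ofReal (‖(r : ℂ) * w‖ ^ 2) =
          ENNReal.ofReal (‖w‖ ^ 2) := by
        rw [← ENNReal.ofReal_mul (by positivity), norm_ofReal_mul hr0.le]
        field_simp
      rw [Complex.real_smul, indicator_of_mem hw, hG, indicator_of_mem hrw, ← mul_assoc, hweight]
    · simp [indicator_of_notMem hw]
  calc ∫⁻ w, F (r * w) ∂weightedVolume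
      = ∫⁻ w, unitDstar.indicator (fun w => ENNReal.ofReal (‖w‖ ^ 2) * F (r * w)) w := by
        rw [lintegral_weightedVolume, lintegral_indicator measurableSet_unitDstar]
    _ ≤ ∫⁻ w, ENNReal.ofReal (r ^ 2)⁻¹ * G (r • w) := lintegral_mono hpointwise
    _ = ENNReal.ofReal (r ^ 2)⁻¹ * (ENNReal.ofReal (r ^ 2)⁻¹ * ∫⁻ w, G w) := by
        rw [lintegral_const_mul' _ _ ENNReal.ofReal_ne_top,
          lintegral_comp_smul_addHaar _ hr0.ne', Complex.finrank_real_complex,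
          abs_of_pos (by positivity)]
    _ = ENNReal.ofReal (r ^ 4)⁻¹ * ∫⁻ w, F w ∂weightedVolume := by
        rw [lintegral_weightedVolume, ← lintegral_indicator measurableSet_unitDstar, ← mul_assoc,
          ← ENNReal.ofReal_mul (by positivity)]
        congr 2
        ring

lemma eLpNorm_comp_ofReal_mul_le {p : ℝ≥0∞} (hp : 1 ≤ p) (hp' : p ≠ ∞) {r : ℝ} (hr0 : 0 < r)
    (hr1 : r ≤ 1) (u : ℂ → ℂ) :
    eLpNorm (fun w => u (r * w)) p weightedVolume ≤
      ENNReal.ofReal (r ^ 4)⁻¹ * eLpNorm u p weightedVolume := by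
  have hp0 : p ≠ 0 := (zero_lt_one.trans_le hp).ne'
  have hq : 0 < p.toReal := ENNReal.toReal_pos hp0 hp'
  have hq1 : 1 / p.toReal ≤ 1 := by
    rw [div_le_one hq]
    simpa using ENNReal.toReal_mono hp' hp
  have hc : 1 ≤ ENNReal.ofReal (r ^ 4)⁻¹ :=
    ENNReal.one_le_ofReal.2 ((one_le_inv₀ (by positivity)).2 (pow_le_one₀ hr0.le hr1))
  simp only [eLpNorm_eq_lintegral_rpow_enorm_toReal hp0 hp']
  calc (∫⁻ w, ‖u (r * w)‖ₑ ^ p.toReal ∂weightedVolume) ^ (1 / p.toReal)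
      ≤ (ENNReal.ofReal (r ^ 4)⁻¹ * ∫⁻ w, ‖u w‖ₑ ^ p.toReal ∂weightedVolume) ^ (1 / p.toReal) := by
        gcongr
        exact lintegral_comp_ofReal_mul_le hr0 hr1 fun w => ‖u w‖ₑ ^ p.toReal
    _ = ENNReal.ofReal (r ^ 4)⁻¹ ^ (1 / p.toReal) *
          (∫⁻ w, ‖u w‖ₑ ^ p.toReal ∂weightedVolume) ^ (1 / p.toReal) :=
        ENNReal.mul_rpow_of_nonneg _ _ (by positivity)
    _ ≤ _ := by
        gcongr
        simpa using ENNReal.rpow_le_rpow_of_exponent_le hc hq1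

lemma ContinuousOn.dilate {h : ℂ → ℂ} (hh : ContinuousOn h unitDstar) (m : ℕ) {r : ℝ}
    (hr0 : 0 < r) (hr1 : r ≤ 1) : ContinuousOn (dilate m r h) unitDstar :=
  continuousOn_const.mul (hh.comp (by fun_prop) (mapsTo_ofReal_mul_unitDstar hr0 hr1))

lemma eLpNorm_dilate_le {p : ℝ≥0∞} (hp : 1 ≤ p) (hp' : p ≠ ∞) (m : ℕ) {r : ℝ}
    (hr : r ∈ Ioc (1 / 2) 1) (u : ℂ → ℂ) :
    eLpNorm (dilate m r u) p weightedVolume ≤ 16 * eLpNorm u p weightedVolume := by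
  have hr0 : 0 < r := by linarith [hr.1]
  calc eLpNorm (dilate m r u) p weightedVolume
      ≤ eLpNorm (fun w => u (r * w)) p weightedVolume := eLpNorm_mono fun w => by
        rw [dilate, norm_mul, norm_pow, Complex.norm_of_nonneg hr0.le]
        exact mul_le_of_le_one_left (norm_nonneg _) (pow_le_one₀ hr0.le hr.2)
    _ ≤ ENNReal.ofReal (r ^ 4)⁻¹ * eLpNorm u p weightedVolume :=
        eLpNorm_comp_ofReal_mul_le hp hp' hr0 hr.2 u
    _ ≤ 16 * eLpNorm u p weightedVolume := by
        gcongr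
        have hr4 : (1 / 2 : ℝ) ^ 4 ≤ r ^ 4 := pow_le_pow_left₀ (by norm_num) hr.1.le 4
        rw [ENNReal.ofReal_le_iff_le_toReal (by norm_num), ENNReal.toReal_ofNat,
          inv_le_comm₀ (by positivity) (by norm_num)]
        linarith

lemma tendsto_eLpNorm_sub_dilate_of_boundedContinuous {μ : Measure ℂ} [IsFiniteMeasure μ]
    {p : ℝ≥0∞} (hp : p ≠ ∞) (φ : ℂ →ᵇ ℂ) (m : ℕ) :
    Tendsto (fun r : ℝ => eLpNorm (⇑φ - dilate m r φ) p μ) (𝓝[<] 1) (𝓝 0) := by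
  rcases eq_or_ne p 0 with rfl | hp0
  · simp
  have hq : 0 < p.toReal := ENNReal.toReal_pos hp0 hp
  simp only [eLpNorm_eq_lintegral_rpow_enorm_toReal hp0 hp, Pi.sub_apply, dilate]
  suffices Tendsto (fun r : ℝ => ∫⁻ w, ‖φ w - r ^ m * φ (r * w)‖ₑ ^ p.toReal ∂μ) (𝓝[<] 1)
      (𝓝 0) by
    have h := ((ENNReal.continuous_rpow_const (y := 1 / p.toReal)).tendsto 0).comp this
    rwa [ENNReal.zero_rpow_of_pos (one_div_pos.2 hq)] at h
  have hbound : ∀ r ∈ Icc (0 : ℝ) 1, ∀ w, ‖φ w - r ^ m * φ (r * w)‖ₑ ^ p.toReal ≤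
      ENNReal.ofReal (2 * ‖φ‖) ^ p.toReal := fun r hr w => by
    gcongr
    rw [← ofReal_norm]
    refine ENNReal.ofReal_le_ofReal ((norm_sub_le _ _).trans ?_)
    rw [norm_mul, norm_pow, Complex.norm_of_nonneg hr.1]
    have := pow_le_one₀ hr.1 hr.2 (n := m)
    nlinarith [φ.norm_coe_le_norm w, φ.norm_coe_le_norm (r * w), norm_nonneg (φ (r * w))]
  simpa using tendsto_lintegral_filter_of_dominated_convergence (μ := μ)
      (F := fun (r : ℝ) w => ‖φ w - r ^ m * φ (r * w)‖ₑ ^ p.toReal) (f := fun _ => 0)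
      (fun _ => ENNReal.ofReal (2 * ‖φ‖) ^ p.toReal)
      (Eventually.of_forall fun r => by fun_prop)
      (by filter_upwards [Ioo_mem_nhdsLT zero_lt_one] with r hr
          using ae_of_all _ (hbound r (Ioo_subset_Icc_self hr)))
      (by rw [lintegral_const]; exact ENNReal.mul_ne_top (by finiteness) (measure_ne_top μ univ))
      (ae_of_all _ fun w => ((by fun_prop : Continuous fun r : ℝ =>
        ‖φ w - r ^ m * φ (r * w)‖ₑ ^ p.toReal).tendsto' 1 0 (by simp [hq])).mono_left
          nhdsWithin_le_nhds)

lemma tendsto_eLpNorm_sub_dilate {p : ℝ≥0∞} (hp : 1 ≤ p) (hp' : p ≠ ∞) {h : ℂ → ℂ}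
    (hcont : ContinuousOn h unitDstar) (hfin : eLpNorm h p weightedVolume < ∞) (m : ℕ) :
    Tendsto (fun r : ℝ => eLpNorm (h - dilate m r h) p weightedVolume) (𝓝[<] 1) (𝓝 0) := by
  refine ENNReal.tendsto_nhds_zero.2 fun ε hε => ?_
  set η := ε / 18
  have hη : η ≠ 0 := (ENNReal.div_pos hε.ne' (by norm_num)).ne'
  obtain ⟨φ, hhφ, -⟩ := MemLp.exists_boundedContinuous_eLpNorm_sub_le hp'
    ⟨hcont.aestronglyMeasurable_weightedVolume, hfin⟩ hη
  filter_upwards [ENNReal.tendsto_nhds_zero.1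
      (tendsto_eLpNorm_sub_dilate_of_boundedContinuous (μ := weightedVolume) hp' φ m) η
      (pos_iff_ne_zero.2 hη),
    Ioc_mem_nhdsLT (show (1 / 2 : ℝ) < 1 by norm_num)] with r hφr hr
  have hφ : ContinuousOn φ unitDstar := φ.continuous.continuousOn
  have hA : AEStronglyMeasurable (h - ⇑φ) weightedVolume :=
    (hcont.sub hφ).aestronglyMeasurable_weightedVolume
  have hB : AEStronglyMeasurable (⇑φ - dilate m r φ) weightedVolume :=
    (φ.continuous.sub (by unfold dilate; fun_prop)).aestronglyMeasurable
  have hC : AEStronglyMeasurable (dilate m r (⇑φ - h)) weightedVolume :=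
    ((hφ.sub hcont).dilate m (by linarith [hr.1]) hr.2).aestronglyMeasurable_weightedVolume
  calc eLpNorm (h - dilate m r h) p weightedVolume
      = eLpNorm ((h - ⇑φ) + (⇑φ - dilate m r φ) + dilate m r (⇑φ - h)) p weightedVolume := by
        rw [dilate_sub]; abel_nf
    _ ≤ eLpNorm (h - ⇑φ) p weightedVolume + eLpNorm (⇑φ - dilate m r φ) p weightedVolume +
          eLpNorm (dilate m r (⇑φ - h)) p weightedVolume := by
        grw [eLpNorm_add_le (hA.add hB) hC hp, eLpNorm_add_le hA hB hp]
    _ ≤ η + η + 16 * η := by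
        gcongr
        grw [eLpNorm_dilate_le hp hp' m hr, eLpNorm_sub_comm, hhφ]
    _ = ε := by
        rw [show η + η + 16 * η = 18 * η by ring,
          ENNReal.mul_div_cancel (by norm_num) (by norm_num)]

lemma tendsto_setLIntegral_sub_dilate {p : ℝ} (hp : 1 ≤ p) {h : ℂ → ℂ}
    (hcont : ContinuousOn h unitDstar)
    (hfin : ∫⁻ w in unitDstar, ENNReal.ofReal (‖h w‖ ^ p * ‖w‖ ^ (2:ℕ)) < ∞) (m : ℕ) :
    Tendsto (fun r : ℝ => ∫⁻ w in unitDstar,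
        ENNReal.ofReal (‖(h - dilate m r h) w‖ ^ p * ‖w‖ ^ (2:ℕ))) (𝓝[<] 1) (𝓝 0) := by
  have hp0 : 0 < p := by linarith
  simp only [setLIntegral_unitDstar_eq_eLpNorm_rpow hp0] at hfin ⊢
  have h := ((ENNReal.continuous_rpow_const (y := p)).tendsto 0).comp
    (tendsto_eLpNorm_sub_dilate (ENNReal.one_le_ofReal.2 hp) ENNReal.ofReal_ne_top hcont
      ((ENNReal.rpow_lt_top_iff_of_pos hp0).1 hfin) m)
  rwa [ENNReal.zero_rpow_of_pos hp0] at h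

/-- functions smooth on a neighborhood of `D̄∖{0}` are dense in the weighted
Sobolev space `W^{k,p}(D*, |w|²)`. -/
theorem smooth_dense_in_weighted_sobolev (k : ℕ) (p : ℝ) (hp : 1 < p) :
    ∀ f : ℂ → ℂ, ContDiffOn ℝ (⊤ : ℕ∞) f unitDstar →
      (∑ α ∈ multiIdx k, ∫⁻ w in unitDstar,
        ENNReal.ofReal (‖Dop α f w‖ ^ p * ‖w‖ ^ (2:ℕ))) < ⊤ →
      ∀ ε : ℝ, 0 < ε →
        ∃ g : ℂ → ℂ, (∃ U : Set ℂ, IsOpen U ∧ Metric.closedBall (0 : ℂ) 1 \ {0} ⊆ U ∧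
            ContDiffOn ℝ (⊤ : ℕ∞) g U) ∧
          (∑ α ∈ multiIdx k, ∫⁻ w in unitDstar,
            ENNReal.ofReal (‖Dop α (f - g) w‖ ^ p * ‖w‖ ^ (2:ℕ))) <
            ENNReal.ofReal ε := by
  intro f hf hfin ε hε
  have hsum := tendsto_finsetSum (multiIdx k) fun α hα => tendsto_setLIntegral_sub_dilate hp.le
    (contDiffOn_Dop isOpen_unitDstar hf α).continuousOn (ENNReal.sum_lt_top.1 hfin α hα)
    (α.1 + α.2)
  rw [Finset.sum_const_zero] at hsum
  obtain ⟨r, hsmall, hr⟩ := ((hsum.eventually (gt_mem_nhds (ENNReal.ofReal_pos.2 hε))).and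
    (Ioo_mem_nhdsLT zero_lt_one)).exists
  have hmaps := mapsTo_ofReal_mul_unitDstar hr.1 hr.2.le
  have hfr := hf.comp_ofReal_mul r
  refine ⟨fun w => f (r * w), ⟨_, isOpen_unitDstar.preimage (continuous_const_mul _),
    closedBall_diff_zero_subset_preimage_unitDstar hr.1 hr.2, hfr⟩, ?_⟩
  refine lt_of_eq_of_lt (Finset.sum_congr rfl fun α _ => setLIntegral_congr_fun
    measurableSet_unitDstar fun w hw => ?_) hsmall
  rw [Dop_sub isOpen_unitDstar hf (hfr.mono hmaps) α hw, Pi.sub_apply, Pi.sub_apply,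
    Dop_comp_ofReal_mul isOpen_unitDstar hf r α (hmaps hw)]
end
end

section
/- There exists a nonzero constant c ∈ ℂ such that for every z = (z₁,z₂) ∈ H, ∫_H B(z,ζ) · ζ̄₂ dV(ζ) = c / z₂, where B is the Bergman kernel of the Hartogs triangle. That is, the Bergman projection of the function ζ ↦ ζ̄₂ equals c/z₂. -/
/-! Integrate over the fibres `|w₁| < |w₂|` of `H` first. On such a fibre the integrand is, up to
a factor independent of `w₁`, the antiholomorphic function `(1 - a w̄₁)⁻²` with `|a| |w₂| < 1`, and
its integral over the disc of radius `|w₂|` is `π |w₂|²` times its value `1` at the centre. This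
leaves `π⁻¹ z₂⁻¹ ∫_{|w₂|<1} |w₂|² (1 - z₂ w̄₂)⁻²`, and the same principle, now with the weight
`|w₂|²`, evaluates the last integral to `π / 2`; hence `c = 1 / 2`. Both disc integrals are computed
by expanding in powers of `w̄` and integrating term by term in polar coordinates, where the
monomial `w^k w̄^(k+n)` integrates to zero unless `n = 0`. Fubini applies because, for fixed `z`,
the integrand is bounded on `H`. -/

open MeasureTheory Complex ComplexConjugate

noncomputable section

/-- The Hartogs triangle `H = {(z₁,z₂) : |z₁| < |z₂| < 1}`. -/
def Hartogs : Set (ℂ × ℂ) := {z | ‖z.1‖ < ‖z.2‖ ∧ ‖z.2‖ < 1}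

/-- The Bergman kernel of the Hartogs triangle. -/
def Bker (z ζ : ℂ × ℂ) : ℂ :=
  ((Real.pi : ℂ) ^ 2)⁻¹ * (z.2 * conj ζ.2)⁻¹ *
    ((1 - (z.1 * conj ζ.1) / (z.2 * conj ζ.2)) ^ 2)⁻¹ * ((1 - z.2 * conj ζ.2) ^ 2)⁻¹

open Metric Set
open scoped Real

theorem integral_exp_int_mul_mul_I (m : ℤ) :
    ∫ θ in (-π)..π, exp (m * θ * I) = if m = 0 then 2 * π else 0 := by
  split_ifs with hm
  · simp [hm, two_mul]
  have hmI : (m : ℂ) * I ≠ 0 := by simp [hm]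
  have hperiod : exp (m * I * π) = exp (m * I * (-π : ℝ)) :=
    exp_eq_exp_iff_exists_int.2 ⟨m, by push_cast; ring⟩
  simp_rw [mul_right_comm _ _ I]
  rw [integral_exp_mul_complex hmI, hperiod, sub_self, zero_div, ofReal_zero]

theorem integral_ball_eq_setIntegral_polarCoord {E : Type*} [NormedAddCommGroup E]
    [NormedSpace ℝ E] (f : ℂ → E) (r : ℝ) :
    ∫ w in ball (0 : ℂ) r, f w =
      ∫ p in Ioo 0 r ×ˢ Ioo (-π) π, p.1 • f (Complex.polarCoord.symm p) := by
  have hpre : polarCoord.target ∩ Complex.polarCoord.symm ⁻¹' ball 0 r =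
      Ioo 0 r ×ˢ Ioo (-π) π := by
    ext ⟨ρ, θ⟩
    simp only [polarCoord_target, mem_inter_iff, mem_prod, mem_preimage, mem_ball_zero_iff,
      Complex.norm_polarCoord_symm, mem_Ioi, mem_Ioo]
    constructor
    · rintro ⟨⟨hρ, hθ⟩, hr⟩
      exact ⟨⟨hρ, by rwa [abs_of_pos hρ] at hr⟩, hθ⟩
    · rintro ⟨⟨hρ, hr⟩, hθ⟩
      exact ⟨⟨hρ, hθ⟩, by rwa [abs_of_pos hρ]⟩
  have hmeas : MeasurableSet (Complex.polarCoord.symm ⁻¹' ball (0 : ℂ) r) :=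
    measurableSet_ball.preimage
      (equivRealProdCLM.symm.continuous.comp continuous_polarCoord_symm).measurable
  rw [← integral_indicator measurableSet_ball, ← Complex.integral_comp_polarCoord_symm,
    ← hpre, ← setIntegral_indicator hmeas]
  congr 1 with p
  by_cases hp : Complex.polarCoord.symm p ∈ ball (0 : ℂ) r
  · rw [indicator_of_mem hp, indicator_of_mem (mem_preimage.2 hp)]
  · rw [indicator_of_notMem hp, indicator_of_notMem (by exact hp), smul_zero]

theorem polarCoord_symm_pow_mul_conj_pow_add (k n : ℕ) (p : ℝ × ℝ) :
    Complex.polarCoord.symm p ^ k * conj (Complex.polarCoord.symm p) ^ (k + n) =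
      ((p.1 ^ (2 * k + n) : ℝ) : ℂ) * exp ((-n : ℤ) * p.2 * I) := by
  obtain ⟨ρ, θ⟩ := p
  have hw : Complex.polarCoord.symm (ρ, θ) = ρ * exp (θ * I) := by
    rw [Complex.polarCoord_symm_apply, exp_mul_I]; push_cast; ring
  have hconj : conj (exp (θ * I)) = exp (-(θ * I)) := by
    rw [← exp_conj, map_mul, conj_ofReal, conj_I, mul_neg]
  rw [hw, map_mul, conj_ofReal, hconj, mul_pow, mul_pow, ← exp_nat_mul, ← exp_nat_mul,
    mul_mul_mul_comm, ← exp_add]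
  push_cast
  ring_nf

theorem integral_Ioo_ofReal_pow {r : ℝ} (hr : 0 ≤ r) (m : ℕ) :
    ∫ ρ in Ioo 0 r, ((ρ ^ m : ℝ) : ℂ) = ((r ^ (m + 1) / (m + 1) : ℝ) : ℂ) := by
  rw [integral_complex_ofReal, ← integral_Ioc_eq_integral_Ioo, ← intervalIntegral.integral_of_le hr,
    integral_pow]
  simp

theorem integral_ball_pow_mul_conj_pow_add (k n : ℕ) {r : ℝ} (hr : 0 ≤ r) :
    ∫ w in ball (0 : ℂ) r, w ^ k * conj w ^ (k + n) =
      if n = 0 then ((π * r ^ (2 * k + 2) / (k + 1) : ℝ) : ℂ) else 0 := by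
  have hangular : ∫ θ in Ioo (-π) π, exp ((-n : ℤ) * θ * I) = if n = 0 then 2 * π else 0 := by
    rw [← integral_Ioc_eq_integral_Ioo,
      ← intervalIntegral.integral_of_le (by linarith [Real.pi_pos]), integral_exp_int_mul_mul_I]
    simp
  simp_rw [integral_ball_eq_setIntegral_polarCoord, polarCoord_symm_pow_mul_conj_pow_add,
    real_smul, ← mul_assoc, ← ofReal_mul, ← pow_succ']
  rw [Measure.volume_eq_prod, setIntegral_prod_mul (fun ρ : ℝ ↦ ((ρ ^ (2 * k + n + 1) : ℝ) : ℂ))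
    (fun θ : ℝ ↦ exp ((-n : ℤ) * θ * I)), integral_Ioo_ofReal_pow hr, hangular]
  split_ifs with hn
  · subst hn
    rw [← ofReal_mul]
    congr 1
    push_cast
    field_simp
    ring
  · simp

theorem integral_ball_pow_mul_conj_pow_mul_tsum (k : ℕ) {r : ℝ} (hr : 0 ≤ r) {c : ℕ → ℂ}
    (hc : Summable fun n ↦ ‖c n‖ * r ^ n) :
    ∫ w in ball (0 : ℂ) r, w ^ k * conj w ^ k * ∑' n, c n * conj w ^ n =
      c 0 * ((π * r ^ (2 * k + 2) / (k + 1) : ℝ) : ℂ) := by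
  set F : ℕ → ℂ → ℂ := fun n w ↦ c n * (w ^ k * conj w ^ (k + n)) with hF
  have hseries : ∀ w, w ^ k * conj w ^ k * ∑' n, c n * conj w ^ n = ∑' n, F n w := by
    intro w
    rw [← tsum_mul_left]
    congr 1 with n
    ring
  have hint : ∀ n, IntegrableOn (F n) (ball 0 r) := fun n ↦
    ((by fun_prop : Continuous (F n)).locallyIntegrable.integrableOn_isCompact
      (isCompact_closedBall 0 r)).mono_set ball_subset_closedBall
  have hbound : ∀ n, ∀ w ∈ ball (0 : ℂ) r, ‖F n w‖ ≤ r ^ (2 * k) * (‖c n‖ * r ^ n) := by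
    intro n w hw
    have hwr : ‖w‖ ≤ r := (mem_ball_zero_iff.1 hw).le
    calc ‖F n w‖ = ‖c n‖ * ‖w‖ ^ (2 * k + n) := by
          simp only [hF, norm_mul, norm_pow, RCLike.norm_conj]; ring
      _ ≤ ‖c n‖ * r ^ (2 * k + n) := by gcongr
      _ = r ^ (2 * k) * (‖c n‖ * r ^ n) := by ring
  have hsum : Summable fun n ↦ ∫ w in ball (0 : ℂ) r, ‖F n w‖ := by
    refine Summable.of_nonneg_of_le (fun n ↦ integral_nonneg fun w ↦ norm_nonneg _)
      (fun n ↦ ?_) ((hc.mul_left (r ^ (2 * k))).mul_right (volume.real (ball (0 : ℂ) r)))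
    refine (le_abs_self _).trans ?_
    rw [← Real.norm_eq_abs]
    exact norm_setIntegral_le_of_norm_le_const measure_ball_lt_top fun w hw ↦ by
      simpa using hbound n w hw
  rw [integral_congr_ae (.of_forall hseries), ← integral_tsum_of_summable_integral_norm hint hsum]
  simp_rw [hF, integral_const_mul, integral_ball_pow_mul_conj_pow_add k _ hr]
  rw [tsum_eq_single 0 fun n hn ↦ by rw [if_neg hn, mul_zero], if_pos rfl]

theorem integral_ball_pow_mul_conj_pow_mul_inv_one_sub_pow (k m : ℕ) {a : ℂ} {r : ℝ}
    (hr : 0 ≤ r) (ha : ‖a‖ * r < 1) :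
    ∫ w in ball (0 : ℂ) r, w ^ k * conj w ^ k * ((1 - a * conj w) ^ (m + 1))⁻¹ =
      ((π * r ^ (2 * k + 2) / (k + 1) : ℝ) : ℂ) := by
  have hseries : ∀ w ∈ ball (0 : ℂ) r, ((1 - a * conj w) ^ (m + 1))⁻¹ =
      ∑' n, ((n + m).choose m * a ^ n : ℂ) * conj w ^ n := by
    intro w hw
    have hlt : ‖a * conj w‖ < 1 := by
      rw [norm_mul, RCLike.norm_conj]
      exact lt_of_le_of_lt (by gcongr; exact (mem_ball_zero_iff.1 hw).le) ha
    simp_rw [mul_assoc, ← mul_pow, tsum_choose_mul_geometric_of_norm_lt_one m hlt, one_div]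
  have hsummable : Summable fun n ↦ ‖((n + m).choose m * a ^ n : ℂ)‖ * r ^ n := by
    have hlt : ‖((‖a‖ * r : ℝ) : ℂ)‖ < 1 := by
      rwa [norm_real, Real.norm_of_nonneg (by positivity)]
    refine ((summable_choose_mul_geometric_of_norm_lt_one m hlt).norm).congr fun n ↦ ?_
    simp [norm_pow, mul_pow, Real.norm_of_nonneg hr, mul_assoc]
  rw [setIntegral_congr_fun measurableSet_ball fun w hw ↦ by rw [hseries w hw],
    integral_ball_pow_mul_conj_pow_mul_tsum k hr hsummable]
  simp

theorem isOpen_hartogs : IsOpen Hartogs :=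
  (isOpen_lt (by fun_prop : Continuous fun ζ : ℂ × ℂ ↦ ‖ζ.1‖) (by fun_prop)).inter
    (isOpen_lt (by fun_prop : Continuous fun ζ : ℂ × ℂ ↦ ‖ζ.2‖) continuous_const)

theorem hartogs_subset_ball : Hartogs ⊆ ball (0 : ℂ × ℂ) 1 := fun ζ hζ ↦ by
  rw [mem_ball_zero_iff, Prod.norm_def]
  exact max_lt (hζ.1.trans hζ.2) hζ.2

theorem mk_mem_hartogs_iff {w₁ w₂ : ℂ} :
    (w₁, w₂) ∈ Hartogs ↔ w₂ ∈ ball (0 : ℂ) 1 ∧ w₁ ∈ ball (0 : ℂ) ‖w₂‖ := by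
  simp only [Hartogs, mem_ofPred_eq, mem_ball_zero_iff, and_comm]

theorem integral_hartogs {E : Type*} [NormedAddCommGroup E] [NormedSpace ℝ E]
    {f : ℂ × ℂ → E} (hf : IntegrableOn f Hartogs) :
    ∫ ζ in Hartogs, f ζ = ∫ w₂ in ball (0 : ℂ) 1, ∫ w₁ in ball (0 : ℂ) ‖w₂‖, f (w₁, w₂) := by
  have hslice : ∀ w₂ : ℂ, ∫ w₁, Hartogs.indicator f (w₁, w₂) =
      (ball (0 : ℂ) 1).indicator (fun w₂ ↦ ∫ w₁ in ball (0 : ℂ) ‖w₂‖, f (w₁, w₂)) w₂ := by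
    intro w₂
    by_cases hw₂ : w₂ ∈ ball (0 : ℂ) 1
    · rw [indicator_of_mem hw₂, ← integral_indicator measurableSet_ball]
      congr 1 with w₁
      by_cases hw₁ : w₁ ∈ ball (0 : ℂ) ‖w₂‖
      · rw [indicator_of_mem (mk_mem_hartogs_iff.2 ⟨hw₂, hw₁⟩), indicator_of_mem hw₁]
      · rw [indicator_of_notMem (fun h ↦ hw₁ (mk_mem_hartogs_iff.1 h).2),
          indicator_of_notMem hw₁]
    · rw [indicator_of_notMem hw₂, ← integral_zero ℂ E]
      congr 1 with w₁
      exact indicator_of_notMem (fun h ↦ hw₂ (mk_mem_hartogs_iff.1 h).1) _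
  have hmeas := isOpen_hartogs.measurableSet
  rw [← integral_indicator hmeas, Measure.volume_eq_prod, integral_prod_symm _
    (by rwa [← Measure.volume_eq_prod, integrable_indicator_iff hmeas])]
  simp_rw [hslice, integral_indicator measurableSet_ball]

theorem Bker_mul_conj_snd (z ζ : ℂ × ℂ) (hζ : ζ.2 ≠ 0) :
    Bker z ζ * conj ζ.2 = ((π : ℂ) ^ 2)⁻¹ * z.2⁻¹ *
      ((1 - z.1 / (z.2 * conj ζ.2) * conj ζ.1) ^ 2)⁻¹ * ((1 - z.2 * conj ζ.2) ^ 2)⁻¹ := by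
  have hq : z.1 * conj ζ.1 / (z.2 * conj ζ.2) = z.1 / (z.2 * conj ζ.2) * conj ζ.1 := by ring
  rw [Bker, hq, mul_inv z.2]
  linear_combination ((π : ℂ) ^ 2)⁻¹ * z.2⁻¹ * ((1 - z.1 / (z.2 * conj ζ.2) * conj ζ.1) ^ 2)⁻¹ *
    ((1 - z.2 * conj ζ.2) ^ 2)⁻¹ * inv_mul_cancel₀ ((map_ne_zero (starRingEnd ℂ)).2 hζ)

theorem norm_inv_one_sub_pow_le {u : ℂ} {t : ℝ} (hu : ‖u‖ ≤ t) (ht : t < 1) (m : ℕ) :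
    ‖((1 - u) ^ m)⁻¹‖ ≤ ((1 - t) ^ m)⁻¹ := by
  have hle : 1 - t ≤ ‖1 - u‖ := by
    linarith [norm_sub_norm_le (1 : ℂ) u, norm_one (α := ℂ)]
  rw [norm_inv, norm_pow]
  gcongr

theorem integrableOn_Bker_mul_conj_snd {z : ℂ × ℂ} (hz : z ∈ Hartogs) :
    IntegrableOn (fun ζ ↦ Bker z ζ * conj ζ.2) Hartogs := by
  have hz₂ : 0 < ‖z.2‖ := (norm_nonneg _).trans_lt hz.1
  have ht : ‖z.1‖ / ‖z.2‖ < 1 := (div_lt_one hz₂).2 hz.1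
  refine IntegrableOn.of_bound (isBounded_ball.subset hartogs_subset_ball).measure_lt_top
    (Measurable.aestronglyMeasurable (by unfold Bker; fun_prop))
    ((π ^ 2)⁻¹ * ‖z.2‖⁻¹ * ((1 - ‖z.1‖ / ‖z.2‖) ^ 2)⁻¹ * ((1 - ‖z.2‖) ^ 2)⁻¹) ?_
  filter_upwards [ae_restrict_mem isOpen_hartogs.measurableSet] with ζ hζ
  have hζ₂ : 0 < ‖ζ.2‖ := (norm_nonneg _).trans_lt hζ.1
  have hq : ‖z.1 / (z.2 * conj ζ.2) * conj ζ.1‖ ≤ ‖z.1‖ / ‖z.2‖ := by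
    rw [norm_mul, norm_div, norm_mul, RCLike.norm_conj, RCLike.norm_conj, div_mul_eq_mul_div,
      mul_div_mul_comm]
    exact mul_le_of_le_one_right (by positivity) ((div_le_one hζ₂).2 hζ.1.le)
  have hp : ‖z.2 * conj ζ.2‖ ≤ ‖z.2‖ := by
    rw [norm_mul, RCLike.norm_conj]
    exact mul_le_of_le_one_right (norm_nonneg _) hζ.2.le
  rw [Bker_mul_conj_snd z ζ (norm_pos_iff.1 hζ₂), norm_mul, norm_mul, norm_mul, norm_inv,
    norm_inv, norm_pow, norm_real, Real.norm_of_nonneg Real.pi_pos.le]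
  gcongr
  exacts [norm_inv_one_sub_pow_le hq ht 2, norm_inv_one_sub_pow_le hp hz.2 2]

theorem integral_ball_Bker_mul_conj_snd {z : ℂ × ℂ} (hz : ‖z.1‖ < ‖z.2‖) (w₂ : ℂ) :
    ∫ w₁ in ball (0 : ℂ) ‖w₂‖, Bker z (w₁, w₂) * conj w₂ =
      (π : ℂ)⁻¹ * z.2⁻¹ * (w₂ * conj w₂ * ((1 - z.2 * conj w₂) ^ 2)⁻¹) := by
  rcases eq_or_ne w₂ 0 with rfl | hw₂
  · simp
  set a := z.1 / (z.2 * conj w₂)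
  have ha : ‖a‖ * ‖w₂‖ < 1 := by
    have hz₂ : 0 < ‖z.2‖ := (norm_nonneg _).trans_lt hz
    rwa [norm_div, norm_mul, RCLike.norm_conj, div_mul_eq_mul_div, mul_div_mul_right _ _
      (norm_ne_zero_iff.2 hw₂), div_lt_one hz₂]
  have hintegrand : ∀ w₁ ∈ ball (0 : ℂ) ‖w₂‖, Bker z (w₁, w₂) * conj w₂ =
      ((π : ℂ) ^ 2)⁻¹ * z.2⁻¹ * ((1 - z.2 * conj w₂) ^ 2)⁻¹ *
        (w₁ ^ 0 * conj w₁ ^ 0 * ((1 - a * conj w₁) ^ (1 + 1))⁻¹) := fun w₁ _ ↦ by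
    rw [Bker_mul_conj_snd z (w₁, w₂) hw₂]
    ring
  rw [setIntegral_congr_fun measurableSet_ball hintegrand, integral_const_mul,
    integral_ball_pow_mul_conj_pow_mul_inv_one_sub_pow 0 1 (norm_nonneg _) ha, mul_conj']
  push_cast
  field_simp
  ring

/-- there is a nonzero constant `c` such that the Bergman projection of
`ζ ↦ ζ̄₂` on the Hartogs triangle equals `c / z₂`. -/
theorem bergman_projection_of_conj_z2 :
    ∃ c : ℂ, c ≠ 0 ∧ ∀ z ∈ Hartogs,
      (∫ ζ in Hartogs, Bker z ζ * conj ζ.2) = c / z.2 := by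
  refine ⟨1 / 2, by norm_num, fun z hz ↦ ?_⟩
  have hdisc := integral_ball_pow_mul_conj_pow_mul_inv_one_sub_pow 1 1 zero_le_one
    (a := z.2) (by rw [mul_one]; exact hz.2)
  simp only [pow_one, one_add_one_eq_two] at hdisc
  rw [integral_hartogs (integrableOn_Bker_mul_conj_snd hz),
    setIntegral_congr_fun measurableSet_ball fun w₂ _ ↦ integral_ball_Bker_mul_conj_snd hz.1 w₂,
    integral_const_mul, hdisc]
  push_cast
  field_simp
  norm_num
end
end
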